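/- Let M and M' be induced models identical except that for some agent i outside coalition Γ the protocol is smaller in M': Pᵢ'(l) ⊆ Pᵢ(l) for all local states l (with all Pᵢ'(l) still nonempty). Then for any joint strategy σ_Γ of Γ and any state s, out_{M'}(s, σ_Γ) ⊆ out_M(s, σ_Γ) and out_{M'}(s, σ_Γ) ≠ ∅. Consequently, if M, s ⊨ ⟨⟨Γ⟩⟩ G p then M', s ⊨ ⟨⟨Γ⟩⟩ G p. -/
import Mathlib


structure DModel (S ι Act PV : Type) where
  P : ι → S → Set Act
  T : S → (ι → Act) → S
  V : S → Set PV

structure APath (S ι Act : Type) where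
  st : ℕ → S
  ac : ℕ → ι → Act

def IsPath {S ι Act PV : Type} (M : DModel S ι Act PV) (π : APath S ι Act) : Prop :=
  (∀ n, π.st (n+1) = M.T (π.st n) (π.ac n)) ∧ ∀ n i, π.ac n i ∈ M.P i (π.st n)

def IsStrategy {S ι Act PV : Type} (M : DModel S ι Act PV) (Γ : Set ι)
    (σ : ι → S → Act) : Prop :=
  ∀ i ∈ Γ, ∀ s, σ i s ∈ M.P i s

def outcome {S ι Act PV : Type} (M : DModel S ι Act PV) (s : S) (Γ : Set ι)
    (σ : ι → S → Act) : Set (APath S ι Act) :=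
  {π | IsPath M π ∧ π.st 0 = s ∧ ∀ n, ∀ i ∈ Γ, π.ac n i = σ i (π.st n)}

def satG {S ι Act PV : Type} (M : DModel S ι Act PV) (s : S) (Γ : Set ι) (p : PV) : Prop :=
  ∃ σ, IsStrategy M Γ σ ∧ (outcome M s Γ σ).Nonempty ∧
    ∀ π ∈ outcome M s Γ σ, ∀ n, p ∈ M.V (π.st n)

theorem stmt_10 {S ι Act PV : Type} (M M' : DModel S ι Act PV)
    (hT : M.T = M'.T) (hV : M.V = M'.V) (Γ : Set ι)
    (hPin : ∀ i ∈ Γ, M'.P i = M.P i)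
    (hPout : ∀ i ∉ Γ, ∀ s, M'.P i s ⊆ M.P i s)
    (hne : ∀ (i : ι) (s : S), (M'.P i s).Nonempty) :
    (∀ σ s, IsStrategy M' Γ σ →
      outcome M' s Γ σ ⊆ outcome M s Γ σ ∧ (outcome M' s Γ σ).Nonempty) ∧
    (∀ s (p : PV), satG M s Γ p → satG M' s Γ p) := by
  have main : ∀ σ s, IsStrategy M' Γ σ →
      outcome M' s Γ σ ⊆ outcome M s Γ σ ∧ (outcome M' s Γ σ).Nonempty := by
    intro σ s hσ
    constructor
    · intro π hπ
      obtain ⟨⟨h1, h2⟩, h0, hΓ⟩ := hπ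
      refine ⟨⟨fun n => by rw [h1 n, hT], fun n i => ?_⟩, h0, hΓ⟩
      by_cases hi : i ∈ Γ
      · have := h2 n i; rwa [hPin i hi] at this
      · exact hPout i hi _ (h2 n i)
    · -- build a path in M'
      classical
      let α : S → ι → Act := fun t i => if i ∈ Γ then σ i t else (hne i t).choose
      have hα : ∀ t i, α t i ∈ M'.P i t := by
        intro t i
        by_cases hi : i ∈ Γ
        · simp only [α, if_pos hi]; exact hσ i hi t
        · simp only [α, if_neg hi]; exact (hne i t).choose_spec
      let st : ℕ → S := fun n => Nat.rec s (fun _ t => M'.T t (α t)) n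
      refine ⟨⟨st, fun n => α (st n)⟩, ⟨⟨fun n => rfl, fun n i => hα _ i⟩, rfl, ?_⟩⟩
      intro n i hi
      simp only [α, if_pos hi]
  refine ⟨main, ?_⟩
  intro s p hsat
  obtain ⟨σ, hσ, hNE, hall⟩ := hsat
  have hσ' : IsStrategy M' Γ σ := fun i hi t => by
    rw [hPin i hi]; exact hσ i hi t
  obtain ⟨hsub, hne'⟩ := main σ s hσ'
  refine ⟨σ, hσ', hne', fun π hπ n => ?_⟩
  have := hall π (hsub hπ) n
  rwa [hV] at this
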